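/- For a loopless matroid M, an element e, and a weighting x : E → ℝ, the difference between the minimum basis weight of the deletion M\e and that of the contraction M/e equals the min-max weight μ_e(x). -/

import Mathlib

/-!
Let `B` be a minimum-weight basis of `M ＼ e`, i.e. a basis of `M` avoiding `e`, and let `C` be
the fundamental circuit of `e` in `B + e`. Exchanging `e` for the heaviest element `f` of `C - e`
turns `B - f` into a basis of `M ／ e`, so `mwb(M ／ e) ≤ mwb(M ＼ e) - x(f) ≤ mwb(M ＼ e) - μ_e(x)`.

Conversely, let `B` be a minimum-weight basis of `M ／ e`, so that `B + e` is a basis of `M`, and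
let `C` be a circuit through `e` attaining `μ_e(x)`. As `e ∉ cl(B)`, some `f ∈ C - e` lies outside
`cl(B)`, and `B + f` is a basis of `M ＼ e` of weight at most `mwb(M ／ e) + μ_e(x)`.
-/

open Matroid Set

variable {α : Type*}

/-- A circuit of a matroid: a minimal dependent set. -/
def Matroid.IsCircuit' (M : Matroid α) (C : Set α) : Prop :=
  M.Dep C ∧ ∀ ⦃D⦄, D ⊂ C → M.Indep D

/-- Looplessness in the sense of the paper: no element is a loop
(every singleton of the ground set is independent) and no element is a
coloop (no element lies in all bases). -/
def Matroid.PaperLoopless (M : Matroid α) : Prop :=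
  ∀ e ∈ M.E, M.Indep {e} ∧ ∃ B, M.IsBase B ∧ e ∉ B

/-- The weight `x(B)` of a set of ground elements. -/
noncomputable def setWeight (x : α → ℝ) (B : Set α) : ℝ := ∑ᶠ e ∈ B, x e

/-- The min-max weight `μ_e(x)`: the minimum over circuits `C` containing `e`
of the maximum weight of an element of `C - e`. -/
noncomputable def muWeight (M : Matroid α) (x : α → ℝ) (e : α) : ℝ :=
  sInf {w | ∃ C, M.IsCircuit' C ∧ e ∈ C ∧ w = sSup (x '' (C \ {e}))}

/-- The bottleneck weight `b_e(x) = min {x(e), μ_e(x)}`. -/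
noncomputable def bottleneck (M : Matroid α) (x : α → ℝ) (e : α) : ℝ :=
  min (x e) (muWeight M x e)

/-- The minimum weight of a basis of `M`. -/
noncomputable def mwb (M : Matroid α) (x : α → ℝ) : ℝ :=
  sInf {w | ∃ B, M.IsBase B ∧ w = setWeight x B}

/-- `B` is an `x`-optimal basis of `M`. -/
def IsOptimalBase (M : Matroid α) (x : α → ℝ) (B : Set α) : Prop :=
  M.IsBase B ∧ ∀ B', M.IsBase B' → setWeight x B ≤ setWeight x B'

/-- Deletion of a single element. -/
noncomputable def Matroid.del (M : Matroid α) (e : α) : Matroid α :=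
  M ↾ (M.E \ {e})

/-- Contraction of a single element, defined by duality: `M/e = (M✶ \ e)✶`. -/
noncomputable def Matroid.con (M : Matroid α) (e : α) : Matroid α :=
  ((M✶ ↾ (M.E \ {e}))✶)

section Weights

variable {β : Type*} {S : Set α} {a : α} {x : α → ℝ}

lemma setWeight_insert (hS : S.Finite) (haS : a ∉ S) :
    setWeight x (insert a S) = x a + setWeight x S :=
  finsum_mem_insert x haS hS

lemma setWeight_diff_singleton (hS : S.Finite) (haS : a ∈ S) :
    setWeight x (S \ {a}) = setWeight x S - x a := by
  rw [eq_sub_iff_add_eq, add_comm,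
    ← setWeight_insert hS.sdiff (notMem_sdiff_of_mem (mem_singleton a)),
    insert_sdiff_singleton, insert_eq_of_mem haS]

lemma sInf_setOf_exists_eq (P : β → Prop) (g : β → ℝ) :
    sInf {w | ∃ b, P b ∧ w = g b} = sInf (g '' {b | P b}) := by
  congr 1
  ext w
  simp [eq_comm]

end Weights

namespace Matroid

variable {M : Matroid α} {B C : Set α} {e f : α} {x : α → ℝ}

lemma isCircuit'_iff : M.IsCircuit' C ↔ M.IsCircuit C :=
  isCircuit_iff_forall_ssubset.symm

lemma del_eq_delete (M : Matroid α) (e : α) : M.del e = M ＼ {e} := rfl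

lemma con_eq_contract (M : Matroid α) (e : α) : M.con e = M ／ {e} := rfl

lemma muWeight_eq_csInf_image (M : Matroid α) (x : α → ℝ) (e : α) :
    muWeight M x e = sInf ((fun C ↦ sSup (x '' (C \ {e}))) '' {C | M.IsCircuit C ∧ e ∈ C}) := by
  rw [muWeight, ← sInf_setOf_exists_eq]
  simp only [isCircuit'_iff, and_assoc]

lemma mwb_eq_csInf_image (M : Matroid α) (x : α → ℝ) :
    mwb M x = sInf (setWeight x '' {B | M.IsBase B}) :=
  sInf_setOf_exists_eq _ _

lemma finite_setOf_isBase (M : Matroid α) [M.Finite] : {B | M.IsBase B}.Finite :=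
  M.ground_finite.finite_subsets.subset fun _ ↦ IsBase.subset_ground

lemma finite_setOf_isCircuit_mem (M : Matroid α) [M.Finite] (e : α) :
    {C | M.IsCircuit C ∧ e ∈ C}.Finite :=
  M.ground_finite.finite_subsets.subset fun _ h ↦ h.1.subset_ground

lemma mwb_le_setWeight [M.Finite] (hB : M.IsBase B) (x : α → ℝ) : mwb M x ≤ setWeight x B := by
  rw [mwb_eq_csInf_image]
  exact csInf_le (M.finite_setOf_isBase.image _).bddBelow (mem_image_of_mem _ hB)

lemma exists_isBase_mwb_eq (M : Matroid α) [M.Finite] (x : α → ℝ) :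
    ∃ B, M.IsBase B ∧ mwb M x = setWeight x B := by
  have hne : {B | M.IsBase B}.Nonempty := M.exists_isBase
  obtain ⟨B, hB, hBx⟩ := (hne.image (setWeight x)).csInf_mem (M.finite_setOf_isBase.image _)
  exact ⟨B, hB, by rw [mwb_eq_csInf_image]; exact hBx.symm⟩

lemma muWeight_le [M.Finite] (hC : M.IsCircuit C) (heC : e ∈ C) (x : α → ℝ) :
    muWeight M x e ≤ sSup (x '' (C \ {e})) := by
  rw [muWeight_eq_csInf_image]
  exact csInf_le ((M.finite_setOf_isCircuit_mem e).image _).bddBelow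
    (mem_image_of_mem _ ⟨hC, heC⟩)

lemma exists_isCircuit_muWeight_eq [M.Finite] (h : ∃ C, M.IsCircuit C ∧ e ∈ C) (x : α → ℝ) :
    ∃ C, M.IsCircuit C ∧ e ∈ C ∧ muWeight M x e = sSup (x '' (C \ {e})) := by
  obtain ⟨C, hC, hCx⟩ := (Set.Nonempty.image _ h).csInf_mem
    ((M.finite_setOf_isCircuit_mem e).image (fun C ↦ sSup (x '' (C \ {e}))))
  exact ⟨C, hC.1, hC.2, by rw [muWeight_eq_csInf_image]; exact hCx.symm⟩

lemma Coindep.exists_isCircuit_mem (h : M.Coindep {e}) : ∃ C, M.IsCircuit C ∧ e ∈ C := by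
  obtain ⟨B, hB, heB⟩ := h.exists_subset_compl_isBase
  rw [singleton_subset_iff] at heB
  exact ⟨_, hB.fundCircuit_isCircuit heB.1 heB.2, M.mem_fundCircuit e B⟩

lemma IsBase.exists_isBase_insert_of_mem_isCircuit (hB : M.IsBase (insert e B)) (heB : e ∉ B)
    (hC : M.IsCircuit C) (heC : e ∈ C) : ∃ f ∈ C \ {e}, f ∉ B ∧ M.IsBase (insert f B) := by
  have hBi : M.Indep B := hB.indep.subset (subset_insert e B)
  have heB' : e ∉ M.closure B := ((hBi.insert_indep_iff_of_notMem heB).1 hB.indep).2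
  obtain ⟨f, hfC, hfB⟩ : ∃ f ∈ C \ {e}, f ∉ M.closure B := by
    by_contra! h
    exact heB' (M.closure_subset_closure_of_subset_closure h
      (hC.mem_closure_sdiff_singleton_of_mem heC))
  have hfB' : f ∉ B := fun h ↦ hfB (M.mem_closure_of_mem h)
  refine ⟨f, hfC, hfB', insert_isBase_of_insert_indep heB hfB' hB ?_⟩
  exact (hBi.insert_indep_iff_of_notMem hfB').2 ⟨hC.subset_ground hfC.1, hfB⟩

lemma IsBase.isBase_insert_sdiff_of_mem_fundCircuit (hB : M.IsBase B) (heE : e ∈ M.E)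
    (heB : e ∉ B) (hf : f ∈ M.fundCircuit e B \ {e}) : M.IsBase (insert e (B \ {f})) := by
  have hI := (hB.indep.mem_fundCircuit_iff (by rwa [hB.closure_eq]) heB).1 hf.1
  rw [← insert_sdiff_singleton_comm (Ne.symm hf.2)] at hI
  exact hB.exchange_isBase_of_indep heB hI

lemma mwb_delete_le_muWeight_add_mwb_contract [M.Finite] (hne : M.IsNonloop e)
    (hco : M.Coindep {e}) (x : α → ℝ) :
    mwb (M ＼ {e}) x ≤ muWeight M x e + mwb (M ／ {e}) x := by
  obtain ⟨B, hB, hBx⟩ := (M ／ {e}).exists_isBase_mwb_eq x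
  rw [hne.indep.contract_isBase_iff, union_singleton, disjoint_singleton_right] at hB
  obtain ⟨C, hC, heC, hCx⟩ := exists_isCircuit_muWeight_eq hco.exists_isCircuit_mem x
  obtain ⟨f, hfC, hfB, hfBase⟩ := hB.1.exists_isBase_insert_of_mem_isCircuit hB.2 hC heC
  have hdel : (M ＼ {e}).IsBase (insert f B) :=
    hco.delete_isBase_iff.2 ⟨hfBase,
      disjoint_singleton_right.2 fun h ↦ h.elim (fun h ↦ hfC.2 h.symm) hB.2⟩
  calc mwb (M ＼ {e}) x ≤ setWeight x (insert f B) := mwb_le_setWeight hdel x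
    _ = x f + setWeight x B := setWeight_insert (hB.1.finite.subset (subset_insert e B)) hfB
    _ ≤ sSup (x '' (C \ {e})) + setWeight x B := by
      gcongr
      exact le_csSup (hC.finite.sdiff.image x).bddAbove (mem_image_of_mem x hfC)
    _ = muWeight M x e + mwb (M ／ {e}) x := by rw [hCx, hBx]

lemma mwb_contract_add_muWeight_le_mwb_delete [M.Finite] (hne : M.IsNonloop e)
    (hco : M.Coindep {e}) (x : α → ℝ) :
    mwb (M ／ {e}) x + muWeight M x e ≤ mwb (M ＼ {e}) x := by
  obtain ⟨B, hB, hBx⟩ := (M ＼ {e}).exists_isBase_mwb_eq x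
  rw [hco.delete_isBase_iff, disjoint_singleton_right] at hB
  have hC : M.IsCircuit (M.fundCircuit e B) := hB.1.fundCircuit_isCircuit hne.mem_ground hB.2
  have hCe : (M.fundCircuit e B \ {e}).Nonempty :=
    sdiff_nonempty.2 fun h ↦ hC.not_indep (hne.indep.subset h)
  obtain ⟨f, hfC, hfx⟩ := (hCe.image x).csSup_mem (hC.finite.sdiff.image x)
  have hfB : f ∈ B := (M.fundCircuit_subset_insert e B hfC.1).resolve_left hfC.2
  have hcon : (M ／ {e}).IsBase (B \ {f}) := by
    rw [hne.indep.contract_isBase_iff, union_singleton, disjoint_singleton_right]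
    exact ⟨hB.1.isBase_insert_sdiff_of_mem_fundCircuit hne.mem_ground hB.2 hfC,
      fun h ↦ hB.2 h.1⟩
  calc mwb (M ／ {e}) x + muWeight M x e ≤ setWeight x (B \ {f}) + x f :=
        add_le_add (mwb_le_setWeight hcon x) (hfx ▸ muWeight_le hC (M.mem_fundCircuit e B) x)
    _ = mwb (M ＼ {e}) x := by rw [setWeight_diff_singleton hB.1.finite hfB, hBx]; ring

end Matroid

/-- the deletion/contraction difference is `μ_e(x)`. -/
theorem stmt11 (M : Matroid α) [M.Finite] (hM : M.PaperLoopless)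
    (x : α → ℝ) {e : α} (he : e ∈ M.E) :
    mwb (M.del e) x - mwb (M.con e) x = muWeight M x e := by
  obtain ⟨heI, B, hB, heB⟩ := hM e he
  have hnl : M.IsNonloop e := indep_singleton.1 heI
  have hco : M.Coindep {e} :=
    coindep_iff_subset_compl_isBase.2 ⟨B, hB, singleton_subset_iff.2 ⟨he, heB⟩⟩
  rw [del_eq_delete, con_eq_contract]
  linarith [mwb_delete_le_muWeight_add_mwb_contract hnl hco x,
    mwb_contract_add_muWeight_le_mwb_delete hnl hco x]
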